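/- Diagonalization of the reflection for a tensor product of Markov chains (core of the tensor-product theorem): let P_1, P_2 be column-stochastic matrices of sizes N_1, N_2 with column states φ_{i,1}, φ_{j,2}. Suppose there are b_1 ∈ {0,…,N_1−1}, b_2 ∈ {0,…,N_2−1} and unitaries U_{i,1} (N_1×N_1) and V_{j,2} (N_2×N_2) with U_{i,1} φ_{i,1} = e_{b_1} for all i and V_{j,2} φ_{j,2} = e_{b_2} for all j. On ℂ^{N_1} ⊗ ℂ^{N_2} ⊗ ℂ^{N_1} ⊗ ℂ^{N_2}, define R = 2 Σ_{i,j} (e_i ⊗ e_j)(e_i ⊗ e_j)† ⊗ (φ_{i,1} ⊗ φ_{j,2})(φ_{i,1} ⊗ φ_{j,2})† − I and W = Σ_{i,j} (e_i ⊗ e_j)(e_i ⊗ e_j)† ⊗ U_{i,1} ⊗ V_{j,2}. Then W is unitary and W R W† = I_{N_1 N_2} ⊗ (2 (e_{b_1} ⊗ e_{b_2})(e_{b_1} ⊗ e_{b_2})† − I_{N_1 N_2}). -/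

import Mathlib

/-!
Both `W` and `R` are block diagonal with respect to the control register `(i, j)`: on the block
`(i, j)`, `W` acts as `U_i ⊗ V_j` and `R` as the reflection `2 |ψ⟩⟨ψ| - 1` about
`ψ = φ_{i,1} ⊗ φ_{j,2}`. Conjugating a reflection about `ψ` by a unitary gives the reflection about
the image of `ψ`, here `U_i φ_{i,1} ⊗ V_j φ_{j,2} = e_{b_1} ⊗ e_{b_2}`, the same in every block.
-/

open Matrix BigOperators

/-- The `i`-th column state of the transition matrix `P`: `(φ_i)_j = √(P_{j,i})`. -/
noncomputable def colState {N : ℕ} (P : Matrix (Fin N) (Fin N) ℝ) (i : Fin N) :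
    Fin N → ℂ :=
  fun j => (Real.sqrt (P j i) : ℂ)

/-- The Szegedy reflection `R = 2 Σ_{i,j} |ij⟩⟨ij| ⊗ |φ_{i,1} φ_{j,2}⟩⟨φ_{i,1} φ_{j,2}| − I`
for the tensor product of two Markov chains, with registers ordered as
(register 1 of chain 1, register 1 of chain 2, register 2 of chain 1, register 2 of
chain 2). -/
noncomputable def tensorReflection {N1 N2 : ℕ}
    (P1 : Matrix (Fin N1) (Fin N1) ℝ) (P2 : Matrix (Fin N2) (Fin N2) ℝ) :
    Matrix ((Fin N1 × Fin N2) × (Fin N1 × Fin N2))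
      ((Fin N1 × Fin N2) × (Fin N1 × Fin N2)) ℂ :=
  Matrix.of (fun p q =>
    2 * (if p.1 = q.1 then 1 else 0) *
        (colState P1 p.1.1 p.2.1 * colState P2 p.1.2 p.2.2) *
        (starRingEnd ℂ) (colState P1 p.1.1 q.2.1 * colState P2 p.1.2 q.2.2) -
      (if p = q then 1 else 0))

/-- The block-diagonal operator `W = Σ_{i,j} |ij⟩⟨ij| ⊗ U_{i,1} ⊗ V_{j,2}`. -/
def tensorBlockDiag {N1 N2 : ℕ}
    (U : Fin N1 → Matrix (Fin N1) (Fin N1) ℂ)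
    (V : Fin N2 → Matrix (Fin N2) (Fin N2) ℂ) :
    Matrix ((Fin N1 × Fin N2) × (Fin N1 × Fin N2))
      ((Fin N1 × Fin N2) × (Fin N1 × Fin N2)) ℂ :=
  Matrix.of (fun p q =>
    (if p.1 = q.1 then 1 else 0) * (U p.1.1 p.2.1 q.2.1 * V p.1.2 p.2.2 q.2.2))

open scoped Kronecker

namespace Matrix

section Controlled

variable {ι n α : Type*} [DecidableEq ι]

/-- The block-diagonal operator `∑ i, |i⟩⟨i| ⊗ A i`. -/
def controlled [Zero α] (A : ι → Matrix n n α) : Matrix (ι × n) (ι × n) α :=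
  of fun p q => if p.1 = q.1 then A p.1 p.2 q.2 else 0

theorem controlled_conjTranspose [AddMonoid α] [StarAddMonoid α] (A : ι → Matrix n n α) :
    (controlled A)ᴴ = controlled fun i => (A i)ᴴ := by
  ext ⟨i, x⟩ ⟨j, y⟩
  by_cases hij : i = j
  · subst hij; simp [controlled]
  · simp [controlled, hij, Ne.symm hij]

theorem controlled_one [DecidableEq n] [Zero α] [One α] :
    controlled (fun _ : ι => (1 : Matrix n n α)) = 1 := by
  ext ⟨i, x⟩ ⟨j, y⟩
  by_cases hij : i = j
  · subst hij; simp [controlled, one_apply]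
  · simp [controlled, hij]

variable [Fintype ι] [Fintype n]

theorem controlled_mul [NonUnitalNonAssocSemiring α] (A B : ι → Matrix n n α) :
    controlled A * controlled B = controlled (A * B) := by
  ext ⟨i, x⟩ ⟨j, y⟩
  by_cases hij : i = j
  · subst hij
    simp [controlled, mul_apply, Fintype.sum_prod_type]
  · simp only [controlled, of_apply, mul_apply, hij, if_false]
    exact Finset.sum_eq_zero fun k _ => by split_ifs <;> simp_all

theorem controlled_mem_unitaryGroup [DecidableEq n] [CommRing α] [StarRing α]
    {A : ι → Matrix n n α} (hA : ∀ i, A i ∈ unitaryGroup n α) :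
    controlled A ∈ unitaryGroup (ι × n) α := by
  have hAA : (A * fun i => (A i)ᴴ) = fun _ => 1 :=
    funext fun i => mem_unitaryGroup_iff.mp (hA i)
  rw [mem_unitaryGroup_iff, star_eq_conjTranspose, controlled_conjTranspose, controlled_mul, hAA,
    controlled_one]

end Controlled

section Reflection

variable {n α : Type*} [DecidableEq n] [CommRing α] [StarRing α]

def reflection (v : n → α) : Matrix n n α :=
  (2 : α) • vecMulVec v (star v) - 1

theorem reflection_single_apply (b x y : n) :
    reflection (Pi.single b (1 : α)) x y =
      2 * (if x = b then 1 else 0) * (if y = b then 1 else 0) - if x = y then 1 else 0 := by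
  by_cases hx : x = b <;> by_cases hy : y = b <;>
    simp [reflection, vecMulVec_apply, one_apply, hx, hy]

theorem mul_reflection_mul_conjTranspose [Fintype n] {W : Matrix n n α}
    (hW : W ∈ unitaryGroup n α) {v w : n → α} (hv : W *ᵥ v = w) :
    W * reflection v * Wᴴ = reflection w := by
  rw [reflection, reflection, mul_sub, sub_mul, mul_one, Matrix.mul_smul, Matrix.smul_mul,
    mul_vecMulVec, vecMulVec_mul, ← star_mulVec, hv, ← star_eq_conjTranspose,
    mem_unitaryGroup_iff.mp hW]

end Reflection

theorem kronecker_mulVec_tensor {l m l' m' α : Type*} [Fintype m] [Fintype m'] [CommSemiring α]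
    (A : Matrix l m α) (B : Matrix l' m' α) (v : m → α) (w : m' → α) :
    (A ⊗ₖ B) *ᵥ (fun x => v x.1 * w x.2) = fun x => (A *ᵥ v) x.1 * (B *ᵥ w) x.2 := by
  ext ⟨i, j⟩
  simp only [mulVec, dotProduct, kroneckerMap_apply, Fintype.sum_prod_type, Finset.sum_mul_sum]
  exact Finset.sum_congr rfl fun _ _ => Finset.sum_congr rfl fun _ _ => mul_mul_mul_comm ..

end Matrix

theorem single_mul_single_eq_single_prod {m n α : Type*} [DecidableEq m] [DecidableEq n]
    [MulZeroOneClass α] (a : m) (b : n) :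
    (fun x : m × n => (Pi.single a 1 : m → α) x.1 * (Pi.single b 1 : n → α) x.2) =
      Pi.single (a, b) 1 := by
  ext ⟨x, y⟩
  by_cases hx : x = a <;> by_cases hy : y = b <;> simp [hx, hy]

theorem tensorBlockDiag_eq_controlled {N1 N2 : ℕ} (U : Fin N1 → Matrix (Fin N1) (Fin N1) ℂ)
    (V : Fin N2 → Matrix (Fin N2) (Fin N2) ℂ) :
    tensorBlockDiag U V = controlled fun ij => U ij.1 ⊗ₖ V ij.2 := by
  ext p q
  simp [tensorBlockDiag, controlled]

theorem tensorReflection_eq_controlled {N1 N2 : ℕ}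
    (P1 : Matrix (Fin N1) (Fin N1) ℝ) (P2 : Matrix (Fin N2) (Fin N2) ℝ) :
    tensorReflection P1 P2 =
      controlled fun ij => reflection fun x => colState P1 ij.1 x.1 * colState P2 ij.2 x.2 := by
  ext ⟨i, x⟩ ⟨j, y⟩
  by_cases hij : i = j
  · subst hij
    simp only [tensorReflection, controlled, reflection, of_apply, Matrix.sub_apply,
      Matrix.smul_apply, vecMulVec_apply, Pi.star_apply, one_apply, if_true, Prod.mk.injEq,
      true_and, starRingEnd_apply, smul_eq_mul]
    ring
  · simp [tensorReflection, controlled, hij]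

theorem tensorProduct_reflection_diagonalization_general (N1 N2 : ℕ)
    (P1 : Matrix (Fin N1) (Fin N1) ℝ) (P2 : Matrix (Fin N2) (Fin N2) ℝ)
    (b1 : Fin N1) (b2 : Fin N2)
    (U : Fin N1 → Matrix (Fin N1) (Fin N1) ℂ)
    (V : Fin N2 → Matrix (Fin N2) (Fin N2) ℂ)
    (hU : ∀ i, U i ∈ Matrix.unitaryGroup (Fin N1) ℂ)
    (hV : ∀ j, V j ∈ Matrix.unitaryGroup (Fin N2) ℂ)
    (hUphi : ∀ i, (U i).mulVec (colState P1 i) = Pi.single b1 1)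
    (hVphi : ∀ j, (V j).mulVec (colState P2 j) = Pi.single b2 1) :
    tensorBlockDiag U V ∈
        Matrix.unitaryGroup ((Fin N1 × Fin N2) × (Fin N1 × Fin N2)) ℂ ∧
    tensorBlockDiag U V * tensorReflection P1 P2 * (tensorBlockDiag U V)ᴴ
      = Matrix.of (fun p q : (Fin N1 × Fin N2) × (Fin N1 × Fin N2) =>
          (if p.1 = q.1 then 1 else 0) *
            (2 * (if p.2 = (b1, b2) then 1 else 0) * (if q.2 = (b1, b2) then 1 else 0) -
              (if p.2 = q.2 then 1 else 0))) := by
  have hW : ∀ ij : Fin N1 × Fin N2, U ij.1 ⊗ₖ V ij.2 ∈ unitaryGroup (Fin N1 × Fin N2) ℂ :=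
    fun ij => kronecker_mem_unitary (hU ij.1) (hV ij.2)
  have hWψ : ∀ ij : Fin N1 × Fin N2,
      (U ij.1 ⊗ₖ V ij.2) *ᵥ (fun x => colState P1 ij.1 x.1 * colState P2 ij.2 x.2) =
        Pi.single (b1, b2) 1 := fun ij => by
    rw [kronecker_mulVec_tensor, hUphi, hVphi, single_mul_single_eq_single_prod]
  rw [tensorBlockDiag_eq_controlled, tensorReflection_eq_controlled]
  refine ⟨controlled_mem_unitaryGroup hW, ?_⟩
  rw [controlled_conjTranspose, controlled_mul, controlled_mul]
  trans controlled fun _ => reflection (Pi.single (b1, b2) 1)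
  · exact congrArg controlled (funext fun ij => mul_reflection_mul_conjTranspose (hW ij) (hWψ ij))
  ext p q
  simp [controlled, reflection_single_apply]

/-- Diagonalization of the Szegedy reflection for a tensor product of Markov chains:
if `U_{i,1} φ_{i,1} = e_{b_1}` and `V_{j,2} φ_{j,2} = e_{b_2}` with all `U_{i,1}`,
`V_{j,2}` unitary, then `W` is unitary and
`W R W† = I_{N_1 N_2} ⊗ (2 (e_{b_1} ⊗ e_{b_2})(e_{b_1} ⊗ e_{b_2})† − I_{N_1 N_2})`. -/
theorem tensorProduct_reflection_diagonalization (N1 N2 : ℕ)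
    (hN1 : 1 ≤ N1) (hN2 : 1 ≤ N2)
    (P1 : Matrix (Fin N1) (Fin N1) ℝ) (P2 : Matrix (Fin N2) (Fin N2) ℝ)
    (h1nonneg : ∀ a i, 0 ≤ P1 a i) (h1col : ∀ i, ∑ a, P1 a i = 1)
    (h2nonneg : ∀ b j, 0 ≤ P2 b j) (h2col : ∀ j, ∑ b, P2 b j = 1)
    (b1 : Fin N1) (b2 : Fin N2)
    (U : Fin N1 → Matrix (Fin N1) (Fin N1) ℂ)
    (V : Fin N2 → Matrix (Fin N2) (Fin N2) ℂ)
    (hU : ∀ i, U i ∈ Matrix.unitaryGroup (Fin N1) ℂ)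
    (hV : ∀ j, V j ∈ Matrix.unitaryGroup (Fin N2) ℂ)
    (hUphi : ∀ i, (U i).mulVec (colState P1 i) = Pi.single b1 1)
    (hVphi : ∀ j, (V j).mulVec (colState P2 j) = Pi.single b2 1) :
    tensorBlockDiag U V ∈
        Matrix.unitaryGroup ((Fin N1 × Fin N2) × (Fin N1 × Fin N2)) ℂ ∧
    tensorBlockDiag U V * tensorReflection P1 P2 * (tensorBlockDiag U V)ᴴ
      = Matrix.of (fun p q : (Fin N1 × Fin N2) × (Fin N1 × Fin N2) =>
          (if p.1 = q.1 then 1 else 0) *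
            (2 * (if p.2 = (b1, b2) then 1 else 0) * (if q.2 = (b1, b2) then 1 else 0) -
              (if p.2 = q.2 then 1 else 0))) :=
  tensorProduct_reflection_diagonalization_general N1 N2 P1 P2 b1 b2 U V hU hV hUphi hVphi
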